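/- arXiv:1901.08847 — 4 statements merged into one kernel-verified Lean document; each statement's English description precedes it below -/
import Mathlib

section
/- Let W be a Hermitian operator on the tripartite space H = H_A ⊗ H_B ⊗ H_C and ψ ∈ H a fixed vector. Then ⟨η, W η⟩ ≥ 0 for all vectors η of the form η = (A ⊗ B ⊗ C)ψ with A, B, C arbitrary linear operators, if and only if ⟨ξ, (W ⊗ |ψ*⟩⟨ψ*|) ξ⟩ ≥ 0 for all product vectors ξ = a ⊗ b ⊗ c with a ∈ H_A ⊗ H_A, b ∈ H_B ⊗ H_B, c ∈ H_C ⊗ H_C (where the tensor factors of the two-copy space are regrouped so that a acts on the pair of A-copies, etc.). -/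
/-! Vectors on the two-copy space `H ⊗ H` are matrices `K : H → H` read as functions of pairs,
and `⟨K, (W ⊗ |ψ*⟩⟨ψ*|) K⟩ = ⟨Kψ, W Kψ⟩`. Under this identification the regrouped product
vectors `a ⊗ b ⊗ c` are exactly the product operators `A ⊗ B ⊗ C`, so the two positivity
conditions range over the same family of numbers. -/

/-- The inner product `∑ i, conj (x i) * y i` (conjugate-linear in the first argument). -/
noncomputable def inn {ι : Type*} [Fintype ι] (x y : ι → ℂ) : ℂ := ∑ i, star (x i) * y i

/-- Kronecker (tensor) product of three matrices. -/
def kron3 {a b c : ℕ} (A : Matrix (Fin a) (Fin a) ℂ) (B : Matrix (Fin b) (Fin b) ℂ)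
    (C : Matrix (Fin c) (Fin c) ℂ) :
    Matrix (Fin a × Fin b × Fin c) (Fin a × Fin b × Fin c) ℂ :=
  fun p q => A p.1 q.1 * B p.2.1 q.2.1 * C p.2.2 q.2.2

/-- Regrouping of a product vector `x ⊗ y ⊗ z` with respect to the split
`(A₁A₂|B₁B₂|C₁C₂)` into a vector on the two-copy space `H ⊗ H`. -/
def regroup {a b c : ℕ} (x : Fin a × Fin a → ℂ) (y : Fin b × Fin b → ℂ)
    (z : Fin c × Fin c → ℂ) :
    (Fin a × Fin b × Fin c) × (Fin a × Fin b × Fin c) → ℂ :=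
  fun p => x (p.1.1, p.2.1) * y (p.1.2.1, p.2.2.1) * z (p.1.2.2, p.2.2.2)

/-- The operator `W ⊗ |ψ*⟩⟨ψ*|` on the two-copy space. -/
def extW {a b c : ℕ} (W : Matrix (Fin a × Fin b × Fin c) (Fin a × Fin b × Fin c) ℂ)
    (ψ : Fin a × Fin b × Fin c → ℂ) :
    Matrix ((Fin a × Fin b × Fin c) × (Fin a × Fin b × Fin c))
      ((Fin a × Fin b × Fin c) × (Fin a × Fin b × Fin c)) ℂ :=
  fun p q => W p.1 q.1 * (star (ψ p.2) * ψ q.2)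

open Matrix Function
open scoped Kronecker

section
variable {ι κ R : Type*} [Fintype ι] [Fintype κ] [CommSemiring R]

theorem kronecker_vecMulVec_mulVec_uncurry (W : Matrix ι ι R) (φ ψ : κ → R) (K : Matrix ι κ R) :
    (W ⊗ₖ vecMulVec φ ψ) *ᵥ uncurry K = fun p => φ p.2 * (W *ᵥ (K *ᵥ ψ)) p.1 := by
  ext ⟨i, k⟩
  simp only [mulVec, dotProduct, kroneckerMap_apply, vecMulVec_apply,
    uncurry_apply_pair (f := K), Fintype.sum_prod_type, Finset.mul_sum]
  exact Finset.sum_congr rfl fun j _ => Finset.sum_congr rfl fun l _ => by ring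

theorem star_uncurry_dotProduct_kronecker_vecMulVec_mulVec [StarRing R] (W : Matrix ι ι R)
    (ψ : κ → R) (K : Matrix ι κ R) :
    star (uncurry K) ⬝ᵥ (W ⊗ₖ vecMulVec (star ψ) ψ) *ᵥ uncurry K =
      star (K *ᵥ ψ) ⬝ᵥ W *ᵥ (K *ᵥ ψ) := by
  rw [kronecker_vecMulVec_mulVec_uncurry]
  simp only [dotProduct, mulVec, Fintype.sum_prod_type, Pi.star_apply,
    uncurry_apply_pair (f := K), star_sum, star_mul', Finset.sum_mul]
  exact Finset.sum_congr rfl fun i _ => Finset.sum_congr rfl fun k _ => by ring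

end

theorem regroup_eq_uncurry_kron3 {a b c : ℕ} (x : Fin a × Fin a → ℂ) (y : Fin b × Fin b → ℂ)
    (z : Fin c × Fin c → ℂ) :
    regroup x y z = uncurry (kron3 (curry x) (curry y) (curry z)) :=
  rfl

theorem extW_eq_kronecker {a b c : ℕ}
    (W : Matrix (Fin a × Fin b × Fin c) (Fin a × Fin b × Fin c) ℂ)
    (ψ : Fin a × Fin b × Fin c → ℂ) :
    extW W ψ = W ⊗ₖ vecMulVec (star ψ) ψ :=
  rfl

theorem stmt2_general {a b c : ℕ}
    (W : Matrix (Fin a × Fin b × Fin c) (Fin a × Fin b × Fin c) ℂ)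
    (ψ : Fin a × Fin b × Fin c → ℂ) :
    (∀ (A : Matrix (Fin a) (Fin a) ℂ) (B : Matrix (Fin b) (Fin b) ℂ)
        (C : Matrix (Fin c) (Fin c) ℂ),
        0 ≤ (inn ((kron3 A B C).mulVec ψ) (W.mulVec ((kron3 A B C).mulVec ψ))).re) ↔
      (∀ (x : Fin a × Fin a → ℂ) (y : Fin b × Fin b → ℂ) (z : Fin c × Fin c → ℂ),
        0 ≤ (inn (regroup x y z) ((extW W ψ).mulVec (regroup x y z))).re) := by
  have hquad : ∀ x y z, inn (regroup x y z) ((extW W ψ).mulVec (regroup x y z)) =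
      inn ((kron3 (curry x) (curry y) (curry z)).mulVec ψ)
        (W.mulVec ((kron3 (curry x) (curry y) (curry z)).mulVec ψ)) := fun x y z => by
    rw [regroup_eq_uncurry_kron3, extW_eq_kronecker]
    exact star_uncurry_dotProduct_kronecker_vecMulVec_mulVec W ψ _
  simp only [hquad]
  exact ⟨fun h x y z => h _ _ _, fun h A B C => h (uncurry A) (uncurry B) (uncurry C)⟩

/-- Theorem 1: `⟨η, W η⟩ ≥ 0` for all `η = (A ⊗ B ⊗ C) ψ` iff
`⟨ξ, (W ⊗ |ψ*⟩⟨ψ*|) ξ⟩ ≥ 0` for all product vectors `ξ = a ⊗ b ⊗ c` in the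
regrouped two-copy space. -/
theorem stmt2 {a b c : ℕ}
    (W : Matrix (Fin a × Fin b × Fin c) (Fin a × Fin b × Fin c) ℂ)
    (hW : W.IsHermitian) (ψ : Fin a × Fin b × Fin c → ℂ) :
    (∀ (A : Matrix (Fin a) (Fin a) ℂ) (B : Matrix (Fin b) (Fin b) ℂ)
        (C : Matrix (Fin c) (Fin c) ℂ),
        0 ≤ (inn ((kron3 A B C).mulVec ψ) (W.mulVec ((kron3 A B C).mulVec ψ))).re) ↔
      (∀ (x : Fin a × Fin a → ℂ) (y : Fin b × Fin b → ℂ) (z : Fin c × Fin c → ℂ),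
        0 ≤ (inn (regroup x y z) ((extW W ψ).mulVec (regroup x y z))).re) :=
  stmt2_general W ψ
end

section
/- For N ≥ 4, the supremum over invertible 2×2 complex matrices A₁,…,A_N of |⟨GHZ_N, (A₁⊗⋯⊗A_N) W_N⟩|²/‖(A₁⊗⋯⊗A_N) W_N‖², where GHZ_N = (|0…0⟩+|1…1⟩)/√2 and W_N = (|10…0⟩+|01…0⟩+⋯+|0…01⟩)/√N, equals 1/2. -/
/-- Kronecker (tensor) product of `N` qubit operators. -/
def kronN {N : ℕ} (A : Fin N → Matrix (Fin 2) (Fin 2) ℂ) :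
    Matrix (Fin N → Fin 2) (Fin N → Fin 2) ℂ :=
  fun f g => ∏ i, A i (f i) (g i)

/-- The `N`-qubit GHZ state `(|0…0⟩+|1…1⟩)/√2`. -/
noncomputable def GHZn (N : ℕ) : (Fin N → Fin 2) → ℂ :=
  fun f => if (∀ i, f i = 0) ∨ (∀ i, f i = 1) then ((Real.sqrt 2 : ℝ) : ℂ)⁻¹ else 0

/-- The `N`-qubit W state `(|10…0⟩+|01…0⟩+⋯+|0…01⟩)/√N`. -/
noncomputable def Wn (N : ℕ) : (Fin N → Fin 2) → ℂ :=
  fun f => if (∑ i, ((f i : ℕ))) = 1 then ((Real.sqrt N : ℝ) : ℂ)⁻¹ else 0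

namespace Aux
open Finset Complex

variable {N : ℕ}

lemma fin2cases (v : Fin 2) : v = 0 ∨ v = 1 := by omega

/-- basis weight-one function -/
def ee (N : ℕ) (i : Fin N) : Fin N → Fin 2 := fun j => if j = i then 1 else 0

lemma ee_inj : Function.Injective (ee N) := by
  intro x y h
  have h2 := congrFun h x
  by_contra hxy
  simp only [ee, if_pos rfl, if_neg hxy] at h2
  exact absurd h2 (by decide)

lemma wt_ee (i : Fin N) : (∑ j, ((ee N i j : ℕ))) = 1 := by
  simp [ee, apply_ite (fun v : Fin 2 => (v : ℕ))]

lemma wt_one_iff (f : Fin N → Fin 2) : (∑ j, ((f j : ℕ))) = 1 ↔ ∃ i, f = ee N i := by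
  constructor
  · intro h
    have hcard : (univ.filter (fun j => f j = 1)).card = 1 := by
      have : (∑ j, ((f j : ℕ))) = (univ.filter (fun j => f j = 1)).card := by
        rw [Finset.card_filter]
        refine Finset.sum_congr rfl (fun j _ => ?_)
        rcases fin2cases (f j) with h | h <;> simp [h]
      omega
    obtain ⟨i, hi⟩ := Finset.card_eq_one.mp hcard
    refine ⟨i, funext fun j => ?_⟩
    have hmem : ∀ k, f k = 1 ↔ k = i := by
      intro k
      have : k ∈ univ.filter (fun j => f j = 1) ↔ k ∈ ({i} : Finset (Fin N)) := by rw [hi]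
      simpa using this
    by_cases hj : j = i
    · subst hj
      simp [ee, (hmem j).mpr rfl]
    · rcases fin2cases (f j) with h | h
      · simp [ee, hj, h]
      · exact absurd ((hmem j).mp h) hj
  · rintro ⟨i, rfl⟩; exact wt_ee i

lemma sum_wt_one (F : (Fin N → Fin 2) → ℂ) :
    (∑ g : Fin N → Fin 2, if (∑ j, ((g j : ℕ))) = 1 then F g else 0) = ∑ i, F (ee N i) := by
  classical
  rw [← Finset.sum_filter]
  have h : (univ : Finset (Fin N → Fin 2)).filter (fun g => (∑ j, ((g j : ℕ))) = 1)
      = Finset.image (ee N) univ := by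
    ext g
    simp only [mem_filter, mem_univ, true_and, mem_image]
    rw [wt_one_iff]
    constructor
    · rintro ⟨i, rfl⟩; exact ⟨i, by simp⟩
    · rintro ⟨i, _, rfl⟩; exact ⟨i, rfl⟩
  rw [h, Finset.sum_image (fun x _ y _ h => ee_inj h)]

lemma psi_apply (A : Fin N → Matrix (Fin 2) (Fin 2) ℂ) (f : Fin N → Fin 2) :
    (kronN A).mulVec (Wn N) f
      = ((Real.sqrt N : ℝ) : ℂ)⁻¹ * ∑ i, ∏ j, A j (f j) (ee N i j) := by
  classical
  unfold Matrix.mulVec kronN Wn dotProduct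
  rw [Finset.mul_sum, ← sum_wt_one (fun g => ((Real.sqrt N : ℝ) : ℂ)⁻¹ * ∏ j, A j (f j) (g j))]
  refine Finset.sum_congr rfl (fun g _ => ?_)
  by_cases h : (∑ j, ((g j : ℕ))) = 1 <;> simp [h, mul_comm]

lemma inn_GHZ (hN : 0 < N) (v : (Fin N → Fin 2) → ℂ) :
    inn (GHZn N) v
      = ((Real.sqrt 2 : ℝ) : ℂ)⁻¹ * (v (fun _ => 0) + v (fun _ => 1)) := by
  classical
  have hzo : (fun _ : Fin N => (0 : Fin 2)) ≠ (fun _ => 1) := by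
    intro h
    exact absurd (congrFun h ⟨0, hN⟩) (by decide)
  unfold inn GHZn
  have : ∀ f : Fin N → Fin 2,
      star (if (∀ i, f i = 0) ∨ (∀ i, f i = 1) then ((Real.sqrt 2 : ℝ) : ℂ)⁻¹ else 0) * v f
      = (if f = (fun _ => 0) then ((Real.sqrt 2 : ℝ) : ℂ)⁻¹ * v f else 0)
        + (if f = (fun _ => 1) then ((Real.sqrt 2 : ℝ) : ℂ)⁻¹ * v f else 0) := by
    intro f
    have h0 : (∀ i, f i = 0) ↔ f = (fun _ => 0) := by
      constructor
      · intro h; exact funext h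
      · intro h i; rw [h]
    have h1 : (∀ i, f i = 1) ↔ f = (fun _ => 1) := by
      constructor
      · intro h; exact funext h
      · intro h i; rw [h]
    simp only [h0, h1]
    by_cases ha : f = (fun _ => 0)
    · subst ha
      rw [if_pos (Or.inl rfl), if_pos rfl, if_neg hzo, add_zero, RCLike.star_def,
        ← Complex.ofReal_inv, Complex.conj_ofReal]
    · by_cases hb : f = (fun _ => 1)
      · subst hb
        rw [if_pos (Or.inr rfl), if_neg (Ne.symm hzo), if_pos rfl, zero_add, RCLike.star_def,
          ← Complex.ofReal_inv, Complex.conj_ofReal]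
      · rw [if_neg (not_or.mpr ⟨ha, hb⟩), if_neg ha, if_neg hb]
        simp
  rw [Finset.sum_congr rfl (fun f _ => this f), Finset.sum_add_distrib]
  rw [Finset.sum_ite_eq' univ (fun _ : Fin N => (0 : Fin 2)), Finset.sum_ite_eq' univ (fun _ : Fin N => (1 : Fin 2))]
  simp [mul_add]

lemma sum_prod_pi {β : Type*} [CommSemiring β] (h : Fin N → Fin 2 → β) :
    (∑ f : Fin N → Fin 2, ∏ j, h j (f j)) = ∏ j, (h j 0 + h j 1) := by
  classical
  rw [show (∏ j, (h j 0 + h j 1)) = ∏ j, ∑ v ∈ (univ : Finset (Fin 2)), h j v from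
    Finset.prod_congr rfl fun j _ => (Fin.sum_univ_two _).symm,
    Finset.prod_univ_sum, Fintype.piFinset_univ]

/-! ### Gram quantities -/

def gram (M : Matrix (Fin 2) (Fin 2) ℂ) (x y : Fin 2) : ℂ :=
  star (M 0 x) * M 0 y + star (M 1 x) * M 1 y

noncomputable def nnr (M : Matrix (Fin 2) (Fin 2) ℂ) : ℝ := normSq (M 0 0) + normSq (M 1 0)
noncomputable def hhr (M : Matrix (Fin 2) (Fin 2) ℂ) : ℝ := normSq (M 0 1) + normSq (M 1 1)
def mmc (M : Matrix (Fin 2) (Fin 2) ℂ) : ℂ := star (M 0 0) * M 0 1 + star (M 1 0) * M 1 1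
noncomputable def muc (M : Matrix (Fin 2) (Fin 2) ℂ) : ℂ := mmc M / ((nnr M : ℝ) : ℂ)
noncomputable def lamc (M : Matrix (Fin 2) (Fin 2) ℂ) : ℂ := M.det / ((nnr M : ℝ) : ℂ)

lemma star_mul_self (z : ℂ) : star z * z = ((normSq z : ℝ) : ℂ) := by
  rw [RCLike.star_def, mul_comm, Complex.mul_conj]

lemma star_ofReal (r : ℝ) : star ((r : ℝ) : ℂ) = ((r : ℝ) : ℂ) := by
  rw [RCLike.star_def, Complex.conj_ofReal]

lemma gram00 (M : Matrix (Fin 2) (Fin 2) ℂ) : gram M 0 0 = ((nnr M : ℝ) : ℂ) := by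
  show star (M 0 0) * M 0 0 + star (M 1 0) * M 1 0 = _
  rw [star_mul_self, star_mul_self, nnr, Complex.ofReal_add]

lemma gram11 (M : Matrix (Fin 2) (Fin 2) ℂ) : gram M 1 1 = ((hhr M : ℝ) : ℂ) := by
  show star (M 0 1) * M 0 1 + star (M 1 1) * M 1 1 = _
  rw [star_mul_self, star_mul_self, hhr, Complex.ofReal_add]

lemma gram01 (M : Matrix (Fin 2) (Fin 2) ℂ) : gram M 0 1 = mmc M := rfl

lemma gram10 (M : Matrix (Fin 2) (Fin 2) ℂ) : gram M 1 0 = star (mmc M) := by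
  simp only [gram, mmc, star_add, star_mul, star_star]

lemma star_muc (M : Matrix (Fin 2) (Fin 2) ℂ) : star (muc M) = star (mmc M) / ((nnr M : ℝ) : ℂ) := by
  rw [muc, star_div₀, star_ofReal]

lemma muc_mul {M : Matrix (Fin 2) (Fin 2) ℂ} (h : nnr M ≠ 0) :
    muc M * ((nnr M : ℝ) : ℂ) = mmc M :=
  div_mul_cancel₀ _ (Complex.ofReal_ne_zero.mpr h)

lemma star_muc_mul {M : Matrix (Fin 2) (Fin 2) ℂ} (h : nnr M ≠ 0) :
    star (muc M) * ((nnr M : ℝ) : ℂ) = star (mmc M) := by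
  rw [star_muc]; exact div_mul_cancel₀ _ (Complex.ofReal_ne_zero.mpr h)

lemma lamc_mul {M : Matrix (Fin 2) (Fin 2) ℂ} (h : nnr M ≠ 0) :
    lamc M * ((nnr M : ℝ) : ℂ) = M.det :=
  div_mul_cancel₀ _ (Complex.ofReal_ne_zero.mpr h)

lemma star_lamc (M : Matrix (Fin 2) (Fin 2) ℂ) :
    star (lamc M) = star M.det / ((nnr M : ℝ) : ℂ) := by
  rw [lamc, star_div₀, star_ofReal]

lemma star_lamc_mul {M : Matrix (Fin 2) (Fin 2) ℂ} (h : nnr M ≠ 0) :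
    star (lamc M) * ((nnr M : ℝ) : ℂ) = star M.det := by
  rw [star_lamc]; exact div_mul_cancel₀ _ (Complex.ofReal_ne_zero.mpr h)

lemma star_det_mul (M : Matrix (Fin 2) (Fin 2) ℂ) :
    star M.det * M.det = ((normSq M.det : ℝ) : ℂ) := star_mul_self _

lemma core_identity (M : Matrix (Fin 2) (Fin 2) ℂ) :
    ((hhr M : ℝ) : ℂ) * ((nnr M : ℝ) : ℂ) = star (mmc M) * mmc M + star M.det * M.det := by
  simp only [hhr, nnr, mmc, Matrix.det_fin_two, Complex.ofReal_add, star_add, star_sub, star_mul,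
    star_star, ← star_mul_self]
  ring

/-- inner product of ψ with itself as a double sum of Gram products -/
lemma inn_psi (A : Fin N → Matrix (Fin 2) (Fin 2) ℂ) :
    inn ((kronN A).mulVec (Wn N)) ((kronN A).mulVec (Wn N))
      = (((N : ℝ) : ℂ))⁻¹ * ∑ i, ∑ k, ∏ j, gram (A j) (ee N i j) (ee N k j) := by
  classical
  unfold inn
  have hr : star (((Real.sqrt N : ℝ) : ℂ)⁻¹) * ((Real.sqrt N : ℝ) : ℂ)⁻¹ = (((N : ℝ) : ℂ))⁻¹ := by
    rw [star_inv₀, star_ofReal, ← mul_inv, ← Complex.ofReal_mul,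
      Real.mul_self_sqrt (Nat.cast_nonneg N)]
  calc (∑ f, star ((kronN A).mulVec (Wn N) f) * (kronN A).mulVec (Wn N) f)
      = ∑ f : Fin N → Fin 2, (((N : ℝ) : ℂ))⁻¹ *
          ∑ i, ∑ k, ∏ j, (star (A j (f j) (ee N i j)) * A j (f j) (ee N k j)) := by
        refine Finset.sum_congr rfl (fun f _ => ?_)
        rw [psi_apply, star_mul']
        rw [show (star (((Real.sqrt N : ℝ) : ℂ)⁻¹) * star (∑ i, ∏ j, A j (f j) (ee N i j))) *
            (((Real.sqrt N : ℝ) : ℂ)⁻¹ * ∑ i, ∏ j, A j (f j) (ee N i j))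
          = (star (((Real.sqrt N : ℝ) : ℂ)⁻¹) * ((Real.sqrt N : ℝ) : ℂ)⁻¹) *
            (star (∑ i, ∏ j, A j (f j) (ee N i j)) * ∑ i, ∏ j, A j (f j) (ee N i j)) by ring, hr]
        congr 1
        rw [star_sum, Finset.sum_mul_sum]
        refine Finset.sum_congr rfl (fun i _ => Finset.sum_congr rfl (fun k _ => ?_))
        rw [star_prod, ← Finset.prod_mul_distrib]
    _ = (((N : ℝ) : ℂ))⁻¹ * ∑ i, ∑ k, ∏ j, gram (A j) (ee N i j) (ee N k j) := by
        rw [← Finset.mul_sum]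
        congr 1
        rw [Finset.sum_comm]
        refine Finset.sum_congr rfl (fun i _ => ?_)
        rw [Finset.sum_comm]
        refine Finset.sum_congr rfl (fun k _ => ?_)
        rw [sum_prod_pi (fun j v => star (A j v (ee N i j)) * A j v (ee N k j))]
        rfl

lemma prod_gram (A : Fin N → Matrix (Fin 2) (Fin 2) ℂ) (h : ∀ j, nnr (A j) ≠ 0) (i k : Fin N) :
    (∏ j, gram (A j) (ee N i j) (ee N k j))
      = star (muc (A i)) * muc (A k) * ∏ j, ((nnr (A j) : ℝ) : ℂ)
        + (if i = k then ((normSq (lamc (A i)) : ℝ) : ℂ) * ∏ j, ((nnr (A j) : ℝ) : ℂ) else 0) := by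
  classical
  have hC : ∀ j, ((nnr (A j) : ℝ) : ℂ) ≠ 0 := fun j => Complex.ofReal_ne_zero.mpr (h j)
  by_cases hik : i = k
  · subst hik
    rw [if_pos rfl]
    rw [← Finset.mul_prod_erase univ _ (Finset.mem_univ i),
        ← Finset.mul_prod_erase univ (fun j => ((nnr (A j) : ℝ) : ℂ)) (Finset.mem_univ i)]
    have h1 : (∏ j ∈ univ.erase i, gram (A j) (ee N i j) (ee N i j))
        = ∏ j ∈ univ.erase i, ((nnr (A j) : ℝ) : ℂ) := by
      refine Finset.prod_congr rfl (fun j hj => ?_)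
      have : ee N i j = 0 := if_neg (Finset.mem_erase.mp hj).1
      rw [this, gram00]
    rw [h1]
    have h2 : ee N i i = 1 := if_pos rfl
    rw [h2, gram11]
    have e5 : ((normSq (lamc (A i)) : ℝ) : ℂ) = star (lamc (A i)) * lamc (A i) :=
      (star_mul_self _).symm
    have key : (star (muc (A i)) * muc (A i) * ((nnr (A i) : ℝ) : ℂ)
        + ((normSq (lamc (A i)) : ℝ) : ℂ) * ((nnr (A i) : ℝ) : ℂ)) * ((nnr (A i) : ℝ) : ℂ)
        = ((hhr (A i) : ℝ) : ℂ) * ((nnr (A i) : ℝ) : ℂ) := by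
      calc (star (muc (A i)) * muc (A i) * ((nnr (A i) : ℝ) : ℂ)
            + ((normSq (lamc (A i)) : ℝ) : ℂ) * ((nnr (A i) : ℝ) : ℂ)) * ((nnr (A i) : ℝ) : ℂ)
          = (star (muc (A i)) * ((nnr (A i) : ℝ) : ℂ)) * (muc (A i) * ((nnr (A i) : ℝ) : ℂ))
            + (star (lamc (A i)) * ((nnr (A i) : ℝ) : ℂ)) * (lamc (A i) * ((nnr (A i) : ℝ) : ℂ)) := by
            rw [e5]; ring
        _ = star (mmc (A i)) * mmc (A i) + star (A i).det * (A i).det := by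
            rw [muc_mul (h i), star_muc_mul (h i), lamc_mul (h i), star_lamc_mul (h i)]
        _ = ((hhr (A i) : ℝ) : ℂ) * ((nnr (A i) : ℝ) : ℂ) := (core_identity (A i)).symm
    have hsuff := mul_right_cancel₀ (hC i) key
    rw [← hsuff]
    ring
  · rw [if_neg hik, add_zero]
    have hk : k ∈ univ.erase i := Finset.mem_erase.mpr ⟨Ne.symm hik, Finset.mem_univ k⟩
    rw [← Finset.mul_prod_erase univ _ (Finset.mem_univ i),
        ← Finset.mul_prod_erase (univ.erase i) _ hk,
        ← Finset.mul_prod_erase univ (fun j => ((nnr (A j) : ℝ) : ℂ)) (Finset.mem_univ i),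
        ← Finset.mul_prod_erase (univ.erase i) (fun j => ((nnr (A j) : ℝ) : ℂ)) hk]
    have h1 : (∏ j ∈ (univ.erase i).erase k, gram (A j) (ee N i j) (ee N k j))
        = ∏ j ∈ (univ.erase i).erase k, ((nnr (A j) : ℝ) : ℂ) := by
      refine Finset.prod_congr rfl (fun j hj => ?_)
      have hj2 := Finset.mem_erase.mp hj
      have hj3 := Finset.mem_erase.mp hj2.2
      rw [show ee N i j = 0 from if_neg hj3.1, show ee N k j = 0 from if_neg hj2.1, gram00]
    rw [h1]
    have e1 : ee N i i = 1 := if_pos rfl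
    have e2 : ee N k i = 0 := if_neg hik
    have e3 : ee N i k = 0 := if_neg (Ne.symm hik)
    have e4 : ee N k k = 1 := if_pos rfl
    rw [e1, e2, e3, e4, gram10, gram01]
    rw [show star (muc (A i)) * muc (A k) *
        (((nnr (A i) : ℝ) : ℂ) * (((nnr (A k) : ℝ) : ℂ) * ∏ j ∈ (univ.erase i).erase k, ((nnr (A j) : ℝ) : ℂ)))
      = (star (muc (A i)) * ((nnr (A i) : ℝ) : ℂ)) * ((muc (A k)) * ((nnr (A k) : ℝ) : ℂ))
          * ∏ j ∈ (univ.erase i).erase k, ((nnr (A j) : ℝ) : ℂ) from by ring,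
      star_muc_mul (h i), muc_mul (h k)]
    ring

lemma inn_psi_closed (A : Fin N → Matrix (Fin 2) (Fin 2) ℂ) (h : ∀ j, nnr (A j) ≠ 0) :
    inn ((kronN A).mulVec (Wn N)) ((kronN A).mulVec (Wn N))
      = ((((N : ℝ))⁻¹ * ((∏ j, nnr (A j)) *
          (normSq (∑ i, muc (A i)) + ∑ i, normSq (lamc (A i)))) : ℝ) : ℂ) := by
  classical
  rw [inn_psi]
  have : (∑ i, ∑ k, ∏ j, gram (A j) (ee N i j) (ee N k j))
      = (star (∑ i, muc (A i)) * (∑ i, muc (A i))) * (∏ j, ((nnr (A j) : ℝ) : ℂ))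
        + (∑ i, ((normSq (lamc (A i)) : ℝ) : ℂ)) * (∏ j, ((nnr (A j) : ℝ) : ℂ)) := by
    rw [Finset.sum_congr rfl (fun i _ => Finset.sum_congr rfl (fun k _ => prod_gram A h i k))]
    rw [Finset.sum_congr rfl (fun i _ => Finset.sum_add_distrib)]
    rw [Finset.sum_add_distrib]
    congr 1
    · rw [star_sum, Finset.sum_mul_sum, Finset.sum_mul]
      refine Finset.sum_congr rfl (fun i _ => ?_)
      rw [Finset.sum_mul]
    · have hinner : ∀ i : Fin N, (∑ k : Fin N, if i = k
          then ((normSq (lamc (A i)) : ℝ) : ℂ) * ∏ j, ((nnr (A j) : ℝ) : ℂ) else 0)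
          = ((normSq (lamc (A i)) : ℝ) : ℂ) * ∏ j, ((nnr (A j) : ℝ) : ℂ) := by
        intro i
        rw [Finset.sum_ite_eq univ i (fun _ => ((normSq (lamc (A i)) : ℝ) : ℂ) * ∏ j, ((nnr (A j) : ℝ) : ℂ))]
        simp
      rw [Finset.sum_congr rfl (fun i _ => hinner i), ← Finset.sum_mul]
  rw [this, star_mul_self]
  push_cast
  ring

/-! ### the key real inequality -/

section KI
variable {N : ℕ}

def wt (g : Fin N → Fin 2) : ℕ := ∑ j, ((g j : ℕ))

lemma KIreal (hN4 : 4 ≤ N) (x y : Fin N → ℝ) (hx : ∀ j, 0 ≤ x j) (hy : ∀ j, 0 ≤ y j) :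
    (∏ j, x j) + (∏ j, y j)
      + (∑ i, (x i * ∏ j ∈ univ.erase i, y j + y i * ∏ j ∈ univ.erase i, x j))
      + 2 * ((N : ℝ) - 1) * (Real.sqrt (∏ j, x j) * Real.sqrt (∏ j, y j))
      ≤ ∏ j, (x j + y j) := by
  classical
  set v : (Fin N → Fin 2) → ℝ := fun g => ∏ j, (if g j = 0 then x j else y j) with hv_def
  have hv : ∀ g, 0 ≤ v g := fun g => Finset.prod_nonneg (fun j _ => by
    by_cases h : g j = 0 <;> simp [h, hx j, hy j])
  have hprod : (∏ j, (x j + y j)) = ∑ g : Fin N → Fin 2, v g := by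
    have h2 := sum_prod_pi (fun j (t : Fin 2) => if t = 0 then x j else y j)
    simp only [if_pos rfl, if_neg (show (1 : Fin 2) ≠ 0 by decide)] at h2
    exact h2.symm
  set i0 : Fin N := ⟨0, by omega⟩ with hi0
  set c0 : Fin N → Fin 2 := fun _ => 0 with hc0
  set c1 : Fin N → Fin 2 := fun _ => 1 with hc1
  set fl : Fin N → (Fin N → Fin 2) := fun i j => if j = i then 0 else 1 with hfl
  set pp : Fin N → (Fin N → Fin 2) := fun k j => if j = i0 ∨ j = k then 1 else 0 with hpp
  set qq : Fin N → (Fin N → Fin 2) := fun k j => if j = i0 ∨ j = k then 0 else 1 with hqq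
  -- weights
  have wt_c0 : wt c0 = 0 := by simp [wt, hc0]
  have wt_c1 : wt c1 = N := by simp [wt, hc1, Finset.card_univ]
  have wt_fl : ∀ i, wt (fl i) = N - 1 := by
    intro i
    have : ∀ j, (((if j = i then (0 : Fin 2) else 1) : Fin 2) : ℕ) = if j = i then 0 else 1 := by
      intro j; by_cases h : j = i <;> simp [h]
    rw [wt]
    simp only [hfl, this]
    rw [Finset.sum_ite, Finset.sum_const, Finset.sum_const, Finset.filter_ne', Finset.card_erase_of_mem (Finset.mem_univ i)]
    simp [Finset.card_univ]
  have wt_pp : ∀ k, k ≠ i0 → wt (pp k) = 2 := by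
    intro k hk
    have : ∀ j, (((if j = i0 ∨ j = k then (1 : Fin 2) else 0) : Fin 2) : ℕ)
        = if j = i0 ∨ j = k then 1 else 0 := by
      intro j; by_cases h : j = i0 ∨ j = k <;> simp [h]
    rw [wt]
    simp only [hpp, this]
    rw [Finset.sum_ite, Finset.sum_const, Finset.sum_const]
    have : Finset.filter (fun j => j = i0 ∨ j = k) univ = {i0, k} := by
      ext j; simp [Finset.mem_insert]
    rw [this, Finset.card_insert_of_notMem (by simp [Ne.symm hk]), Finset.card_singleton]
    simp
  have wt_qq : ∀ k, k ≠ i0 → wt (qq k) = N - 2 := by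
    intro k hk
    have : ∀ j, (((if j = i0 ∨ j = k then (0 : Fin 2) else 1) : Fin 2) : ℕ)
        = if j = i0 ∨ j = k then 0 else 1 := by
      intro j; by_cases h : j = i0 ∨ j = k <;> simp [h]
    rw [wt]
    simp only [hqq, this]
    rw [Finset.sum_ite, Finset.sum_const, Finset.sum_const]
    have hfil : Finset.filter (fun j => ¬(j = i0 ∨ j = k)) univ
        = (univ.erase i0).erase k := by
      ext j; simp [Finset.mem_erase, not_or, and_comm]
    rw [hfil, Finset.card_erase_of_mem (Finset.mem_erase.mpr ⟨hk, Finset.mem_univ k⟩),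
      Finset.card_erase_of_mem (Finset.mem_univ i0)]
    simp only [Finset.card_univ, Fintype.card_fin, smul_eq_mul, mul_one, mul_zero, zero_add]
    omega
  have wt_ee' : ∀ i : Fin N, wt (ee N i) = 1 := fun i => wt_ee i
  -- injectivity of fl, pp, qq
  have fl_inj : Function.Injective fl := by
    intro a b h
    have h2 := congrFun h a
    by_contra hab
    simp only [hfl, if_pos rfl, if_neg hab] at h2
    exact absurd h2 (by decide)
  have pp_injOn : ∀ a ∈ univ.erase i0, ∀ b ∈ univ.erase i0, pp a = pp b → a = b := by
    intro a ha b hb h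
    have ha' := (Finset.mem_erase.mp ha).1
    have h2 := congrFun h a
    simp only [hpp, if_pos (Or.inr rfl)] at h2
    by_contra hab
    rw [if_neg (by push_neg; exact ⟨ha', hab⟩)] at h2
    exact absurd h2 (by decide)
  have qq_injOn : ∀ a ∈ univ.erase i0, ∀ b ∈ univ.erase i0, qq a = qq b → a = b := by
    intro a ha b hb h
    have ha' := (Finset.mem_erase.mp ha).1
    have h2 := congrFun h a
    simp only [hqq, if_pos (Or.inr rfl)] at h2
    by_contra hab
    rw [if_neg (by push_neg; exact ⟨ha', hab⟩)] at h2
    exact absurd h2 (by decide)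
  -- the families
  set F0 : Finset (Fin N → Fin 2) := {c0} with hF0
  set F1 : Finset (Fin N → Fin 2) := {c1} with hF1
  set F2 : Finset (Fin N → Fin 2) := Finset.image (ee N) univ with hF2
  set F3 : Finset (Fin N → Fin 2) := Finset.image fl univ with hF3
  set F4 : Finset (Fin N → Fin 2) := Finset.image pp (univ.erase i0) with hF4
  set F5 : Finset (Fin N → Fin 2) := Finset.image qq (univ.erase i0) with hF5
  -- membership weight facts
  have mem0 : ∀ g ∈ F0, wt g = 0 := by intro g hg; rw [Finset.mem_singleton.mp hg]; exact wt_c0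
  have mem1 : ∀ g ∈ F1, wt g = N := by intro g hg; rw [Finset.mem_singleton.mp hg]; exact wt_c1
  have mem2 : ∀ g ∈ F2, wt g = 1 := by
    intro g hg; obtain ⟨i, _, rfl⟩ := Finset.mem_image.mp hg; exact wt_ee' i
  have mem3 : ∀ g ∈ F3, wt g = N - 1 := by
    intro g hg; obtain ⟨i, _, rfl⟩ := Finset.mem_image.mp hg; exact wt_fl i
  have mem4 : ∀ g ∈ F4, wt g = 2 ∧ g i0 = 1 := by
    intro g hg; obtain ⟨k, hk, rfl⟩ := Finset.mem_image.mp hg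
    exact ⟨wt_pp k (Finset.mem_erase.mp hk).1, by simp [hpp]⟩
  have mem5 : ∀ g ∈ F5, wt g = N - 2 ∧ g i0 = 0 := by
    intro g hg; obtain ⟨k, hk, rfl⟩ := Finset.mem_image.mp hg
    exact ⟨wt_qq k (Finset.mem_erase.mp hk).1, by simp [hqq]⟩
  -- disjointness
  have disj : ∀ (P Q : Finset (Fin N → Fin 2)),
      (∀ g ∈ P, ∀ _ : g ∈ Q, False) → Disjoint P Q := by
    intro P Q h
    rw [Finset.disjoint_left]
    intro g hg hg2
    exact h g hg hg2
  have d01 : Disjoint F0 F1 := disj _ _ (fun g h1 h2 => by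
    have := mem0 g h1; have := mem1 g h2; omega)
  have d02 : Disjoint F0 F2 := disj _ _ (fun g h1 h2 => by
    have := mem0 g h1; have := mem2 g h2; omega)
  have d03 : Disjoint F0 F3 := disj _ _ (fun g h1 h2 => by
    have := mem0 g h1; have := mem3 g h2; omega)
  have d04 : Disjoint F0 F4 := disj _ _ (fun g h1 h2 => by
    have := mem0 g h1; have := (mem4 g h2).1; omega)
  have d05 : Disjoint F0 F5 := disj _ _ (fun g h1 h2 => by
    have := mem0 g h1; have := (mem5 g h2).1; omega)
  have d12 : Disjoint F1 F2 := disj _ _ (fun g h1 h2 => by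
    have := mem1 g h1; have := mem2 g h2; omega)
  have d13 : Disjoint F1 F3 := disj _ _ (fun g h1 h2 => by
    have := mem1 g h1; have := mem3 g h2; omega)
  have d14 : Disjoint F1 F4 := disj _ _ (fun g h1 h2 => by
    have := mem1 g h1; have := (mem4 g h2).1; omega)
  have d15 : Disjoint F1 F5 := disj _ _ (fun g h1 h2 => by
    have := mem1 g h1; have := (mem5 g h2).1; omega)
  have d23 : Disjoint F2 F3 := disj _ _ (fun g h1 h2 => by
    have := mem2 g h1; have := mem3 g h2; omega)
  have d24 : Disjoint F2 F4 := disj _ _ (fun g h1 h2 => by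
    have := mem2 g h1; have := (mem4 g h2).1; omega)
  have d25 : Disjoint F2 F5 := disj _ _ (fun g h1 h2 => by
    have := mem2 g h1; have := (mem5 g h2).1; omega)
  have d34 : Disjoint F3 F4 := disj _ _ (fun g h1 h2 => by
    have := mem3 g h1; have := (mem4 g h2).1; omega)
  have d35 : Disjoint F3 F5 := disj _ _ (fun g h1 h2 => by
    have := mem3 g h1; have := (mem5 g h2).1; omega)
  have d45 : Disjoint F4 F5 := disj _ _ (fun g h1 h2 => by
    have h4 := (mem4 g h1).2; have h5 := (mem5 g h2).2
    rw [h4] at h5; exact absurd h5 (by decide))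
  -- sums over families
  have s0 : ∑ g ∈ F0, v g = ∏ j, x j := by
    rw [hF0, Finset.sum_singleton]
    exact Finset.prod_congr rfl (fun j _ => by simp [hc0])
  have s1 : ∑ g ∈ F1, v g = ∏ j, y j := by
    rw [hF1, Finset.sum_singleton]
    exact Finset.prod_congr rfl (fun j _ => by simp [hc1])
  have s2 : ∑ g ∈ F2, v g = ∑ i, y i * ∏ j ∈ univ.erase i, x j := by
    rw [hF2, Finset.sum_image (fun a _ b _ h => ee_inj h)]
    refine Finset.sum_congr rfl (fun i _ => ?_)
    rw [show v (ee N i) = ∏ j, (if ee N i j = 0 then x j else y j) from rfl,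
      ← Finset.mul_prod_erase univ _ (Finset.mem_univ i)]
    congr 1
    · simp [ee]
    · refine Finset.prod_congr rfl (fun j hj => ?_)
      simp [ee, (Finset.mem_erase.mp hj).1]
  have s3 : ∑ g ∈ F3, v g = ∑ i, x i * ∏ j ∈ univ.erase i, y j := by
    rw [hF3, Finset.sum_image (fun a _ b _ h => fl_inj h)]
    refine Finset.sum_congr rfl (fun i _ => ?_)
    rw [show v (fl i) = ∏ j, (if fl i j = 0 then x j else y j) from rfl,
      ← Finset.mul_prod_erase univ _ (Finset.mem_univ i)]
    congr 1
    · simp [hfl]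
    · refine Finset.prod_congr rfl (fun j hj => ?_)
      simp [hfl, (Finset.mem_erase.mp hj).1]
  have s45 : (∑ g ∈ F4, v g) + (∑ g ∈ F5, v g)
      ≥ 2 * ((N : ℝ) - 1) * (Real.sqrt (∏ j, x j) * Real.sqrt (∏ j, y j)) := by
    rw [hF4, hF5, Finset.sum_image pp_injOn, Finset.sum_image qq_injOn, ← Finset.sum_add_distrib]
    have hterm : ∀ k ∈ univ.erase i0,
        2 * (Real.sqrt (∏ j, x j) * Real.sqrt (∏ j, y j)) ≤ v (pp k) + v (qq k) := by
      intro k _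
      have hvv : v (pp k) * v (qq k) = (∏ j, x j) * (∏ j, y j) := by
        rw [show v (pp k) = ∏ j, (if pp k j = 0 then x j else y j) from rfl,
          show v (qq k) = ∏ j, (if qq k j = 0 then x j else y j) from rfl,
          ← Finset.prod_mul_distrib, ← Finset.prod_mul_distrib]
        refine Finset.prod_congr rfl (fun j _ => ?_)
        by_cases h : (j = i0 ∨ j = k) <;> simp [hpp, hqq, h] <;> ring
      calc 2 * (Real.sqrt (∏ j, x j) * Real.sqrt (∏ j, y j))
          = 2 * Real.sqrt (v (pp k)) * Real.sqrt (v (qq k)) := by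
            rw [← Real.sqrt_mul (Finset.prod_nonneg (fun j _ => hx j)), ← hvv,
              Real.sqrt_mul (hv _)]
            ring
        _ ≤ Real.sqrt (v (pp k)) ^ 2 + Real.sqrt (v (qq k)) ^ 2 := two_mul_le_add_sq _ _
        _ = v (pp k) + v (qq k) := by rw [Real.sq_sqrt (hv _), Real.sq_sqrt (hv _)]
    calc 2 * ((N : ℝ) - 1) * (Real.sqrt (∏ j, x j) * Real.sqrt (∏ j, y j))
        = ∑ _k ∈ univ.erase i0, 2 * (Real.sqrt (∏ j, x j) * Real.sqrt (∏ j, y j)) := by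
          rw [Finset.sum_const, Finset.card_erase_of_mem (Finset.mem_univ i0), Finset.card_univ,
            Fintype.card_fin, nsmul_eq_mul]
          push_cast [Nat.cast_sub (by omega : 1 ≤ N)]
          ring
      _ ≤ ∑ k ∈ univ.erase i0, (v (pp k) + v (qq k)) := Finset.sum_le_sum hterm
  -- assemble
  set F : Finset (Fin N → Fin 2) := ((((F0 ∪ F1) ∪ F2) ∪ F3) ∪ F4) ∪ F5 with hF
  have hsum_F : ∑ g ∈ F, v g
      = (∏ j, x j) + (∏ j, y j) + (∑ i, y i * ∏ j ∈ univ.erase i, x j)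
        + (∑ i, x i * ∏ j ∈ univ.erase i, y j) + ((∑ g ∈ F4, v g) + (∑ g ∈ F5, v g)) := by
    rw [hF]
    rw [Finset.sum_union (by
      refine Finset.disjoint_union_left.mpr ⟨?_, d45⟩
      refine Finset.disjoint_union_left.mpr ⟨?_, d35⟩
      refine Finset.disjoint_union_left.mpr ⟨?_, d25⟩
      exact Finset.disjoint_union_left.mpr ⟨d05, d15⟩)]
    rw [Finset.sum_union (by
      refine Finset.disjoint_union_left.mpr ⟨?_, d34⟩
      refine Finset.disjoint_union_left.mpr ⟨?_, d24⟩
      exact Finset.disjoint_union_left.mpr ⟨d04, d14⟩)]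
    rw [Finset.sum_union (by
      refine Finset.disjoint_union_left.mpr ⟨?_, d23⟩
      exact Finset.disjoint_union_left.mpr ⟨d03, d13⟩)]
    rw [Finset.sum_union (Finset.disjoint_union_left.mpr ⟨d02, d12⟩)]
    rw [Finset.sum_union d01]
    rw [s0, s1, s2, s3]
    ring
  have hFsub : F ⊆ univ := Finset.subset_univ F
  have hle : ∑ g ∈ F, v g ≤ ∑ g : Fin N → Fin 2, v g :=
    Finset.sum_le_sum_of_subset_of_nonneg hFsub (fun g _ _ => hv g)
  rw [hprod]
  refine le_trans ?_ hle
  rw [hsum_F]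
  have := s45
  have hsplit : (∑ i, (x i * ∏ j ∈ univ.erase i, y j + y i * ∏ j ∈ univ.erase i, x j))
      = (∑ i, x i * ∏ j ∈ univ.erase i, y j) + ∑ i, y i * ∏ j ∈ univ.erase i, x j :=
    Finset.sum_add_distrib
  rw [hsplit]
  linarith

end KI

/-! ### the numerator and the upper bound -/

section Upper
variable {N : ℕ}

noncomputable def Sval (A : Fin N → Matrix (Fin 2) (Fin 2) ℂ) : ℂ :=
  (∑ i, A i 0 1 * ∏ j ∈ univ.erase i, A j 0 0) + ∑ i, A i 1 1 * ∏ j ∈ univ.erase i, A j 1 0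

lemma prod_row (A : Fin N → Matrix (Fin 2) (Fin 2) ℂ) (v : Fin 2) (i : Fin N) :
    (∏ j, A j v (ee N i j)) = A i v 1 * ∏ j ∈ univ.erase i, A j v 0 := by
  rw [← Finset.mul_prod_erase univ _ (Finset.mem_univ i), show ee N i i = 1 from if_pos rfl]
  congr 1
  exact Finset.prod_congr rfl (fun j hj => by
    rw [show ee N i j = 0 from if_neg (Finset.mem_erase.mp hj).1])

lemma inn_GHZ_psi (hN : 0 < N) (A : Fin N → Matrix (Fin 2) (Fin 2) ℂ) :
    inn (GHZn N) ((kronN A).mulVec (Wn N))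
      = ((Real.sqrt 2 : ℝ) : ℂ)⁻¹ * (((Real.sqrt N : ℝ) : ℂ)⁻¹ * Sval A) := by
  rw [inn_GHZ hN, psi_apply, psi_apply, ← mul_add]
  congr 1
  rw [Sval]
  congr 2
  · exact Finset.sum_congr rfl fun i _ => prod_row A 0 i
  · exact Finset.sum_congr rfl fun i _ => prod_row A 1 i

lemma norm_inn_GHZ (hN : 0 < N) (A : Fin N → Matrix (Fin 2) (Fin 2) ℂ) :
    ‖inn (GHZn N) ((kronN A).mulVec (Wn N))‖ ^ 2 = 2⁻¹ * ((N : ℝ))⁻¹ * ‖Sval A‖ ^ 2 := by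
  rw [inn_GHZ_psi hN, norm_mul, norm_mul, norm_inv, norm_inv, Complex.norm_real,
    Complex.norm_real, Real.norm_eq_abs, Real.norm_eq_abs, _root_.abs_of_nonneg (Real.sqrt_nonneg 2), _root_.abs_of_nonneg (Real.sqrt_nonneg _)]
  rw [mul_pow, mul_pow, inv_pow, inv_pow, Real.sq_sqrt (by norm_num : (2:ℝ) ≥ 0),
    Real.sq_sqrt (Nat.cast_nonneg N)]
  ring

lemma nnC (M : Matrix (Fin 2) (Fin 2) ℂ) :
    ((nnr M : ℝ) : ℂ) = star (M 0 0) * M 0 0 + star (M 1 0) * M 1 0 := by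
  rw [nnr, Complex.ofReal_add, ← star_mul_self, ← star_mul_self]

lemma col_expand0 (M : Matrix (Fin 2) (Fin 2) ℂ) (h : nnr M ≠ 0) :
    M 0 1 = muc M * M 0 0 - star (M 1 0) * lamc M := by
  have hC : ((nnr M : ℝ) : ℂ) ≠ 0 := Complex.ofReal_ne_zero.mpr h
  refine mul_right_cancel₀ hC ?_
  rw [sub_mul, show muc M * M 0 0 * ((nnr M : ℝ) : ℂ) = (muc M * ((nnr M : ℝ) : ℂ)) * M 0 0 by ring,
    muc_mul h, show star (M 1 0) * lamc M * ((nnr M : ℝ) : ℂ)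
      = star (M 1 0) * (lamc M * ((nnr M : ℝ) : ℂ)) by ring, lamc_mul h, nnC, mmc,
    Matrix.det_fin_two]
  ring

lemma col_expand1 (M : Matrix (Fin 2) (Fin 2) ℂ) (h : nnr M ≠ 0) :
    M 1 1 = muc M * M 1 0 + star (M 0 0) * lamc M := by
  have hC : ((nnr M : ℝ) : ℂ) ≠ 0 := Complex.ofReal_ne_zero.mpr h
  refine mul_right_cancel₀ hC ?_
  rw [add_mul, show muc M * M 1 0 * ((nnr M : ℝ) : ℂ) = (muc M * ((nnr M : ℝ) : ℂ)) * M 1 0 by ring,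
    muc_mul h, show star (M 0 0) * lamc M * ((nnr M : ℝ) : ℂ)
      = star (M 0 0) * (lamc M * ((nnr M : ℝ) : ℂ)) by ring, lamc_mul h, nnC, mmc,
    Matrix.det_fin_two]
  ring

lemma Sval_eq (A : Fin N → Matrix (Fin 2) (Fin 2) ℂ) (h : ∀ j, nnr (A j) ≠ 0) :
    Sval A = (∑ i, muc (A i)) * ((∏ j, A j 0 0) + (∏ j, A j 1 0))
      + ∑ i, lamc (A i) * (star (A i 0 0) * (∏ j ∈ univ.erase i, A j 1 0)
          - star (A i 1 0) * (∏ j ∈ univ.erase i, A j 0 0)) := by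
  rw [Sval]
  have e0 : ∀ i : Fin N, A i 0 1 * ∏ j ∈ univ.erase i, A j 0 0
      = muc (A i) * ∏ j, A j 0 0
        - lamc (A i) * (star (A i 1 0) * ∏ j ∈ univ.erase i, A j 0 0) := by
    intro i
    rw [col_expand0 (A i) (h i),
      ← Finset.mul_prod_erase univ (fun j => A j 0 0) (Finset.mem_univ i)]
    ring
  have e1 : ∀ i : Fin N, A i 1 1 * ∏ j ∈ univ.erase i, A j 1 0
      = muc (A i) * ∏ j, A j 1 0
        + lamc (A i) * (star (A i 0 0) * ∏ j ∈ univ.erase i, A j 1 0) := by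
    intro i
    rw [col_expand1 (A i) (h i),
      ← Finset.mul_prod_erase univ (fun j => A j 1 0) (Finset.mem_univ i)]
    ring
  rw [Finset.sum_congr rfl (fun i _ => e0 i), Finset.sum_congr rfl (fun i _ => e1 i),
    Finset.sum_sub_distrib, Finset.sum_add_distrib, ← Finset.sum_mul, ← Finset.sum_mul]
  rw [Finset.sum_congr rfl
    (fun i _ => mul_sub (lamc (A i)) (star (A i 0 0) * ∏ j ∈ univ.erase i, A j 1 0)
      (star (A i 1 0) * ∏ j ∈ univ.erase i, A j 0 0)), Finset.sum_sub_distrib]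
  ring

lemma normsq_eq (z : ℂ) : ‖z‖ ^ 2 = normSq z := by rw [Complex.sq_norm]

lemma KI_complex (hN4 : 4 ≤ N) (A : Fin N → Matrix (Fin 2) (Fin 2) ℂ) :
    ‖(∏ j, A j 0 0) + ∏ j, A j 1 0‖ ^ 2
      + ∑ i, ‖star (A i 0 0) * (∏ j ∈ univ.erase i, A j 1 0)
              - star (A i 1 0) * (∏ j ∈ univ.erase i, A j 0 0)‖ ^ 2
      ≤ ∏ j, nnr (A j) := by
  classical
  set x : Fin N → ℝ := fun j => normSq (A j 0 0) with hx_def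
  set y : Fin N → ℝ := fun j => normSq (A j 1 0) with hy_def
  have hx : ∀ j, 0 ≤ x j := fun j => normSq_nonneg _
  have hy : ∀ j, 0 ≤ y j := fun j => normSq_nonneg _
  set R : ℝ := ((∏ j, A j 0 0) * (starRingEnd ℂ) (∏ j, A j 1 0)).re with hR_def
  have hX : normSq (∏ j, A j 0 0) = ∏ j, x j := map_prod Complex.normSq _ univ
  have hY : normSq (∏ j, A j 1 0) = ∏ j, y j := map_prod Complex.normSq _ univ
  have hXe : ∀ i, normSq (∏ j ∈ univ.erase i, A j 0 0) = ∏ j ∈ univ.erase i, x j :=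
    fun i => map_prod Complex.normSq _ _
  have hYe : ∀ i, normSq (∏ j ∈ univ.erase i, A j 1 0) = ∏ j ∈ univ.erase i, y j :=
    fun i => map_prod Complex.normSq _ _
  have hterm1 : ‖(∏ j, A j 0 0) + ∏ j, A j 1 0‖ ^ 2 = (∏ j, x j) + (∏ j, y j) + 2 * R := by
    rw [normsq_eq, Complex.normSq_add, hX, hY]
  have hcross : ∀ i : Fin N,
      ((star (A i 0 0) * ∏ j ∈ univ.erase i, A j 1 0) *
        (starRingEnd ℂ) (star (A i 1 0) * ∏ j ∈ univ.erase i, A j 0 0)).re = R := by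
    intro i
    have key : (star (A i 0 0) * ∏ j ∈ univ.erase i, A j 1 0) *
        (starRingEnd ℂ) (star (A i 1 0) * ∏ j ∈ univ.erase i, A j 0 0)
        = (starRingEnd ℂ) ((∏ j, A j 0 0) * (starRingEnd ℂ) (∏ j, A j 1 0)) := by
      rw [← Finset.mul_prod_erase univ (fun j => A j 0 0) (Finset.mem_univ i),
        ← Finset.mul_prod_erase univ (fun j => A j 1 0) (Finset.mem_univ i)]
      simp only [map_mul, Complex.conj_conj, RCLike.star_def]
      ring
    rw [key, Complex.conj_re]
  have hterm2 : ∀ i : Fin N,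
      ‖star (A i 0 0) * (∏ j ∈ univ.erase i, A j 1 0)
        - star (A i 1 0) * (∏ j ∈ univ.erase i, A j 0 0)‖ ^ 2
      = x i * (∏ j ∈ univ.erase i, y j) + y i * (∏ j ∈ univ.erase i, x j) - 2 * R := by
    intro i
    rw [normsq_eq, Complex.normSq_sub, map_mul, map_mul, hcross i]
    rw [show normSq (star (A i 0 0)) = x i by rw [RCLike.star_def, Complex.normSq_conj],
      show normSq (star (A i 1 0)) = y i by rw [RCLike.star_def, Complex.normSq_conj],
      hXe i, hYe i]
  have hRbound : -(Real.sqrt (∏ j, x j) * Real.sqrt (∏ j, y j)) ≤ R := by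
    have h1 : |R| ≤ ‖((∏ j, A j 0 0) * (starRingEnd ℂ) (∏ j, A j 1 0))‖ :=
      Complex.abs_re_le_norm _
    have h2 : ‖((∏ j, A j 0 0) * (starRingEnd ℂ) (∏ j, A j 1 0))‖
        = Real.sqrt (∏ j, x j) * Real.sqrt (∏ j, y j) := by
      rw [norm_mul, Complex.norm_def, Complex.norm_def, Complex.normSq_conj, hX, hY]
    nlinarith [abs_nonneg R, neg_abs_le R]
  have hsum : (∑ i : Fin N, (x i * (∏ j ∈ univ.erase i, y j)
        + y i * (∏ j ∈ univ.erase i, x j) - 2 * R))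
      = (∑ i, (x i * (∏ j ∈ univ.erase i, y j) + y i * (∏ j ∈ univ.erase i, x j)))
        - (N : ℝ) * (2 * R) := by
    rw [Finset.sum_sub_distrib, Finset.sum_const, Finset.card_univ, Fintype.card_fin,
      nsmul_eq_mul]
  have hKI := KIreal hN4 x y hx hy
  have hprod_nnr : (∏ j, nnr (A j)) = ∏ j, (x j + y j) :=
    Finset.prod_congr rfl (fun j _ => rfl)
  rw [hterm1, Finset.sum_congr rfl (fun i _ => hterm2 i), hsum, hprod_nnr]
  have hNR : 4 ≤ (N : ℝ) := by exact_mod_cast hN4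
  nlinarith [hRbound, hKI, Real.sqrt_nonneg (∏ j, x j), Real.sqrt_nonneg (∏ j, y j)]

end Upper

/-! ### assembly -/

section Main
variable {N : ℕ}

lemma det_ne_zero {M : Matrix (Fin 2) (Fin 2) ℂ} (h : IsUnit M) : M.det ≠ 0 := by
  rw [Matrix.isUnit_iff_isUnit_det, isUnit_iff_ne_zero] at h
  exact h

lemma nnr_pos {M : Matrix (Fin 2) (Fin 2) ℂ} (h : IsUnit M) : 0 < nnr M := by
  rcases (add_nonneg (normSq_nonneg (M 0 0)) (normSq_nonneg (M 1 0))).lt_or_eq with h1 | h1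
  · exact h1
  · exfalso
    have h00 : normSq (M 0 0) = 0 := by
      have := normSq_nonneg (M 0 0); have := normSq_nonneg (M 1 0); linarith
    have h10 : normSq (M 1 0) = 0 := by
      have := normSq_nonneg (M 0 0); have := normSq_nonneg (M 1 0); linarith
    have hdet : M.det = 0 := by
      rw [Matrix.det_fin_two, normSq_eq_zero.mp h00, normSq_eq_zero.mp h10]
      ring
    exact det_ne_zero h hdet

lemma normS_sq_le (hN4 : 4 ≤ N) (A : Fin N → Matrix (Fin 2) (Fin 2) ℂ)
    (h : ∀ j, nnr (A j) ≠ 0) :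
    ‖Sval A‖ ^ 2 ≤ (‖∑ i, muc (A i)‖ ^ 2 + ∑ i, ‖lamc (A i)‖ ^ 2) * ∏ j, nnr (A j) := by
  classical
  set P := (∏ j, A j 0 0) + (∏ j, A j 1 0) with hP
  set u : Fin N → ℂ := fun i => star (A i 0 0) * (∏ j ∈ univ.erase i, A j 1 0)
      - star (A i 1 0) * (∏ j ∈ univ.erase i, A j 0 0) with hu
  have h1 : ‖Sval A‖ ≤ ‖∑ i, muc (A i)‖ * ‖P‖ + ∑ i, ‖lamc (A i)‖ * ‖u i‖ := by
    rw [Sval_eq A h]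
    refine le_trans (norm_add_le _ _) ?_
    rw [norm_mul]
    gcongr
    refine le_trans (norm_sum_le _ _) (le_of_eq ?_)
    exact Finset.sum_congr rfl fun i _ => norm_mul _ _
  have h1' : ‖Sval A‖ ^ 2 ≤ (‖∑ i, muc (A i)‖ * ‖P‖ + ∑ i, ‖lamc (A i)‖ * ‖u i‖) ^ 2 :=
    pow_le_pow_left₀ (norm_nonneg _) h1 2
  set f : Option (Fin N) → ℝ := fun o => o.elim ‖∑ i, muc (A i)‖ (fun i => ‖lamc (A i)‖) with hf
  set g : Option (Fin N) → ℝ := fun o => o.elim ‖P‖ (fun i => ‖u i‖) with hg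
  have hCS := Finset.sum_mul_sq_le_sq_mul_sq univ f g
  rw [Fintype.sum_option (fun o => f o * g o), Fintype.sum_option (fun o => f o ^ 2),
    Fintype.sum_option (fun o => g o ^ 2)] at hCS
  simp only [hf, hg, Option.elim] at hCS
  have h3 : ‖P‖ ^ 2 + ∑ i, ‖u i‖ ^ 2 ≤ ∏ j, nnr (A j) := KI_complex hN4 A
  have hnonneg : (0:ℝ) ≤ ‖∑ i, muc (A i)‖ ^ 2 + ∑ i, ‖lamc (A i)‖ ^ 2 := by
    have : (0:ℝ) ≤ ∑ i, ‖lamc (A i)‖ ^ 2 :=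
      Finset.sum_nonneg fun i _ => sq_nonneg _
    positivity
  calc ‖Sval A‖ ^ 2 ≤ (‖∑ i, muc (A i)‖ * ‖P‖ + ∑ i, ‖lamc (A i)‖ * ‖u i‖) ^ 2 := h1'
    _ ≤ (‖∑ i, muc (A i)‖ ^ 2 + ∑ i, ‖lamc (A i)‖ ^ 2) * (‖P‖ ^ 2 + ∑ i, ‖u i‖ ^ 2) := hCS
    _ ≤ (‖∑ i, muc (A i)‖ ^ 2 + ∑ i, ‖lamc (A i)‖ ^ 2) * ∏ j, nnr (A j) :=
        mul_le_mul_of_nonneg_left h3 hnonneg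

lemma upper (hN4 : 4 ≤ N) (A : Fin N → Matrix (Fin 2) (Fin 2) ℂ) (hU : ∀ i, IsUnit (A i)) :
    ‖inn (GHZn N) ((kronN A).mulVec (Wn N))‖ ^ 2 /
      (inn ((kronN A).mulVec (Wn N)) ((kronN A).mulVec (Wn N))).re ≤ 1 / 2 := by
  classical
  have h : ∀ j, nnr (A j) ≠ 0 := fun j => (nnr_pos (hU j)).ne'
  have h0 : 0 < N := by omega
  rw [inn_psi_closed A h, Complex.ofReal_re, norm_inn_GHZ h0 A]
  set T : ℝ := normSq (∑ i, muc (A i)) + ∑ i, normSq (lamc (A i)) with hT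
  have hTnorm : T = ‖∑ i, muc (A i)‖ ^ 2 + ∑ i, ‖lamc (A i)‖ ^ 2 := by
    rw [hT, normsq_eq]
    congr 1
    exact Finset.sum_congr rfl fun i _ => (normsq_eq _).symm
  have hTpos : 0 < T := by
    have hl0 : 0 < normSq (lamc (A ⟨0, h0⟩)) := by
      apply normSq_pos.mpr
      unfold lamc
      exact div_ne_zero (det_ne_zero (hU _)) (Complex.ofReal_ne_zero.mpr (h _))
    have h2 : normSq (lamc (A ⟨0, h0⟩)) ≤ ∑ i, normSq (lamc (A i)) :=
      Finset.single_le_sum (f := fun i => normSq (lamc (A i)))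
        (fun i _ => normSq_nonneg _) (Finset.mem_univ (⟨0, h0⟩ : Fin N))
    have h3 := normSq_nonneg (∑ i, muc (A i))
    rw [hT]; linarith
  have hPpos : 0 < ∏ j, nnr (A j) := Finset.prod_pos (fun j _ => nnr_pos (hU j))
  have hNpos : (0:ℝ) < (N : ℝ) := by exact_mod_cast h0
  rw [div_le_iff₀ (by positivity)]
  have hS := normS_sq_le hN4 A h
  calc 2⁻¹ * ((N:ℝ))⁻¹ * ‖Sval A‖ ^ 2
      ≤ 2⁻¹ * ((N:ℝ))⁻¹ * ((‖∑ i, muc (A i)‖ ^ 2 + ∑ i, ‖lamc (A i)‖ ^ 2) * ∏ j, nnr (A j)) := by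
        have hc : (0:ℝ) ≤ 2⁻¹ * ((N:ℝ))⁻¹ := by positivity
        nlinarith [hS, hc]
    _ = 1 / 2 * ((N:ℝ)⁻¹ * ((∏ j, nnr (A j)) * T)) := by rw [hTnorm]; ring

/-! ### the family approaching the supremum -/

lemma member_value (hN4 : 4 ≤ N) {ε : ℝ} (hε : 0 < ε) :
    ∃ A : Fin N → Matrix (Fin 2) (Fin 2) ℂ,
      (∀ i, IsUnit (A i)) ∧
      (2⁻¹ / (1 + (N:ℝ) * ε ^ 2) : ℝ)
        = ‖inn (GHZn N) ((kronN A).mulVec (Wn N))‖ ^ 2 /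
            (inn ((kronN A).mulVec (Wn N)) ((kronN A).mulVec (Wn N))).re := by
  classical
  have h0 : 0 < N := by omega
  have hN0 : (N:ℂ) ≠ 0 := Nat.cast_ne_zero.mpr (by omega)
  set M : Matrix (Fin 2) (Fin 2) ℂ := !![0, (ε:ℂ); 1, (N:ℂ)⁻¹] with hM
  have e00 : M 0 0 = 0 := rfl
  have e01 : M 0 1 = (ε:ℂ) := rfl
  have e10 : M 1 0 = 1 := rfl
  have e11 : M 1 1 = (N:ℂ)⁻¹ := rfl
  have hdet : M.det = -(ε:ℂ) := by
    rw [hM, Matrix.det_fin_two_of]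
    ring
  have hUnit : IsUnit M := by
    rw [Matrix.isUnit_iff_isUnit_det, hdet, isUnit_iff_ne_zero, neg_ne_zero]
    exact Complex.ofReal_ne_zero.mpr hε.ne'
  refine ⟨fun _ => M, fun _ => hUnit, ?_⟩
  have hnnr : nnr M = 1 := by
    rw [nnr, e00, e10]
    simp
  have hh : ∀ j : Fin N, nnr ((fun _ : Fin N => M) j) ≠ 0 := fun j => by
    rw [hnnr]; norm_num
  -- numerator
  have hSval : Sval (fun _ : Fin N => M) = 1 := by
    rw [Sval]
    have hz : ∀ i : Fin N, M 0 1 * ∏ _j ∈ univ.erase i, M 0 0 = 0 := by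
      intro i
      rw [e00, Finset.prod_const, zero_pow, mul_zero]
      rw [Finset.card_erase_of_mem (Finset.mem_univ i), Finset.card_univ, Fintype.card_fin]
      omega
    have ho : ∀ i : Fin N, M 1 1 * ∏ _j ∈ univ.erase i, M 1 0 = (N:ℂ)⁻¹ := by
      intro i
      rw [e11, e10, Finset.prod_const, one_pow, mul_one]
    rw [Finset.sum_congr rfl (fun i _ => hz i), Finset.sum_congr rfl (fun i _ => ho i)]
    rw [Finset.sum_const, Finset.sum_const, Finset.card_univ, Fintype.card_fin,
      nsmul_eq_mul, nsmul_eq_mul]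
    rw [mul_zero, zero_add, mul_inv_cancel₀ hN0]
  have hnum : ‖inn (GHZn N) ((kronN (fun _ : Fin N => M)).mulVec (Wn N))‖ ^ 2
      = 2⁻¹ * ((N:ℝ))⁻¹ := by
    rw [norm_inn_GHZ h0, hSval, norm_one, one_pow, mul_one]
  -- denominator pieces
  have hmuc : muc M = (N:ℂ)⁻¹ := by
    rw [muc, mmc, e00, e01, e10, e11, hnnr]
    simp
  have hlamc : lamc M = -(ε:ℂ) := by
    rw [lamc, hdet, hnnr]
    simp
  have hden : (inn ((kronN (fun _ : Fin N => M)).mulVec (Wn N))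
      ((kronN (fun _ : Fin N => M)).mulVec (Wn N))).re
      = (N:ℝ)⁻¹ * (1 + (N:ℝ) * ε ^ 2) := by
    rw [inn_psi_closed _ hh, Complex.ofReal_re]
    have h1 : (∏ j : Fin N, nnr ((fun _ : Fin N => M) j)) = 1 := by
      rw [Finset.prod_congr rfl (fun j _ => hnnr), Finset.prod_const_one]
    have h2 : (∑ i : Fin N, muc ((fun _ : Fin N => M) i)) = 1 := by
      rw [Finset.sum_congr rfl (fun i _ => hmuc), Finset.sum_const, Finset.card_univ,
        Fintype.card_fin, nsmul_eq_mul, mul_inv_cancel₀ hN0]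
    have h3 : (∑ i : Fin N, normSq (lamc ((fun _ : Fin N => M) i))) = (N:ℝ) * ε ^ 2 := by
      rw [Finset.sum_congr rfl (fun i _ => by rw [hlamc])]
      rw [Finset.sum_const, Finset.card_univ, Fintype.card_fin, nsmul_eq_mul]
      rw [normSq_neg, Complex.normSq_ofReal]
      ring
    rw [h1, h2, h3]
    simp
  rw [hnum, hden]
  have hpos : (0:ℝ) < 1 + (N:ℝ) * ε ^ 2 := by positivity
  have hNR : (0:ℝ) < (N:ℝ) := by exact_mod_cast h0
  field_simp

end Main

end Aux

open Aux Finset Complex Filter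

/-- for `N ≥ 4`, the supremum over invertible `A₁, …, A_N` of
`|⟨GHZ_N,(A₁⊗⋯⊗A_N)W_N⟩|²/‖(A₁⊗⋯⊗A_N)W_N‖²` equals `1/2`. -/
theorem stmt6 (N : ℕ) (hN : 4 ≤ N) :
    IsLUB {r : ℝ | ∃ A : Fin N → Matrix (Fin 2) (Fin 2) ℂ,
        (∀ i, IsUnit (A i)) ∧
        r = ‖inn (GHZn N) ((kronN A).mulVec (Wn N))‖ ^ 2 /
            (inn ((kronN A).mulVec (Wn N)) ((kronN A).mulVec (Wn N))).re}
      (1 / 2) := by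

  constructor
  · rintro r ⟨A, hU, rfl⟩
    exact upper hN A hU
  · intro b hb
    have hmem : ∀ ε : ℝ, 0 < ε →
        (2⁻¹ / (1 + (N:ℝ) * ε ^ 2) : ℝ) ∈ {r : ℝ | ∃ A : Fin N → Matrix (Fin 2) (Fin 2) ℂ,
          (∀ i, IsUnit (A i)) ∧
          r = ‖inn (GHZn N) ((kronN A).mulVec (Wn N))‖ ^ 2 /
              (inn ((kronN A).mulVec (Wn N)) ((kronN A).mulVec (Wn N))).re} := by
      intro ε hε
      exact member_value hN hε
    have hev : ∀ᶠ ε in nhdsWithin (0:ℝ) (Set.Ioi 0), 2⁻¹ / (1 + (N:ℝ) * ε ^ 2) ≤ b := by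
      filter_upwards [eventually_mem_nhdsWithin] with ε hε
      exact hb (hmem ε hε)
    have hcont : Continuous fun ε : ℝ => 2⁻¹ / (1 + (N:ℝ) * ε ^ 2) := by
      apply Continuous.div continuous_const (by continuity)
      intro x
      positivity
    have htend : Tendsto (fun ε : ℝ => 2⁻¹ / (1 + (N:ℝ) * ε ^ 2))
        (nhdsWithin (0:ℝ) (Set.Ioi 0)) (nhds (1/2)) := by
      have h1 : Tendsto (fun ε : ℝ => 2⁻¹ / (1 + (N:ℝ) * ε ^ 2)) (nhds 0) (nhds (1/2)) := by
        have := hcont.tendsto 0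
        simpa using this
      exact h1.mono_left nhdsWithin_le_nhds
    exact le_of_tendsto htend hev
end

section
/- Let μ, ν ≥ 0, let s > 0, and let λ > 0. The real symmetric 2×2 matrix Λ with entries Λ₁₁ = (λ/N)(1 + s·μ²/(μ²+ν²)) − (μ²+ν²), Λ₁₂ = Λ₂₁ = s·λ·μν/(N(μ²+ν²)), Λ₂₂ = (λ/N)(1 + s·ν²/(μ²+ν²)), with μ²+ν² > 0 and N > 0, is positive semidefinite if and only if λ/N ≥ μ²/(1+s) + ν². -/
set_option maxHeartbeats 1000000 in
/-- positivity criterion for the `2×2` matrix `Λ` from the appendix: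
`Λ ⪰ 0` iff `λ/N ≥ μ²/(1+s) + ν²`. -/
theorem stmt9 (μ ν s lam N : ℝ) (hμ : 0 ≤ μ) (hν : 0 ≤ ν) (hs : 0 < s)
    (hlam : 0 < lam) (hμν : 0 < μ ^ 2 + ν ^ 2) (hN : 0 < N) :
    (Matrix.of
        !![lam / N * (1 + s * μ ^ 2 / (μ ^ 2 + ν ^ 2)) - (μ ^ 2 + ν ^ 2),
            s * lam * μ * ν / (N * (μ ^ 2 + ν ^ 2));
          s * lam * μ * ν / (N * (μ ^ 2 + ν ^ 2)),
            lam / N * (1 + s * ν ^ 2 / (μ ^ 2 + ν ^ 2))]).PosSemidef ↔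
      lam / N ≥ μ ^ 2 / (1 + s) + ν ^ 2 := by
  have ht : (0:ℝ) < μ ^ 2 + ν ^ 2 := hμν
  have ht' : (μ ^ 2 + ν ^ 2) ≠ 0 := ne_of_gt ht
  set L : ℝ := lam / N with hLdef
  have hL : 0 < L := div_pos hlam hN
  set a : ℝ := L * (1 + s * μ ^ 2 / (μ ^ 2 + ν ^ 2)) - (μ ^ 2 + ν ^ 2) with ha
  set b : ℝ := s * lam * μ * ν / (N * (μ ^ 2 + ν ^ 2)) with hb
  set d : ℝ := L * (1 + s * ν ^ 2 / (μ ^ 2 + ν ^ 2)) with hd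
  have hb' : b = s * L * μ * ν / (μ ^ 2 + ν ^ 2) := by
    rw [hb, hLdef]; field_simp
  have hdpos : 0 < d := by
    rw [hd]
    have h1 : 0 ≤ s * ν ^ 2 / (μ ^ 2 + ν ^ 2) := by positivity
    nlinarith
  have hdet : a * d - b ^ 2 =
      L * (L * (1 + s) - ((μ ^ 2 + ν ^ 2) + s * ν ^ 2)) := by
    rw [ha, hd, hb']
    field_simp
    ring
  have hspos : (0:ℝ) < 1 + s := by linarith
  have expand : ∀ x : Fin 2 → ℝ, dotProduct (star x)
      (Matrix.mulVec (Matrix.of !![a, b; b, d]) x) =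
      a * x 0 ^ 2 + 2 * b * (x 0 * x 1) + d * x 1 ^ 2 := by
    intro x
    simp [dotProduct, Matrix.mulVec, Fin.sum_univ_two]
    change x 0 * (a * x 0 + b * x 1) + x 1 * (b * x 0 + d * x 1) = _
    ring
  rw [Matrix.posSemidef_iff_dotProduct_mulVec]
  constructor
  · rintro ⟨-, h⟩
    have key := h ![d, -b]
    rw [expand] at key
    simp only [Matrix.cons_val_zero, Matrix.cons_val_one, Matrix.head_cons] at key
    have hdet0 : 0 ≤ a * d - b ^ 2 := by nlinarith [hdpos, key]
    have hkey : (μ ^ 2 + ν ^ 2) + s * ν ^ 2 ≤ L * (1 + s) := by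
      rw [hdet] at hdet0
      nlinarith [hL]
    rw [ge_iff_le, div_add' _ _ _ (ne_of_gt hspos), div_le_iff₀ hspos]
    nlinarith
  · intro hcond
    have hcond' : μ ^ 2 + ν ^ 2 * (1 + s) ≤ L * (1 + s) := by
      rw [ge_iff_le, div_add' _ _ _ (ne_of_gt hspos), div_le_iff₀ hspos] at hcond
      linarith
    have hdet0 : 0 ≤ a * d - b ^ 2 := by
      rw [hdet]
      have h2 : 0 ≤ L * (1 + s) - ((μ ^ 2 + ν ^ 2) + s * ν ^ 2) := by nlinarith
      positivity
    refine ⟨?_, ?_⟩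
    · show Matrix.conjTranspose (Matrix.of !![a, b; b, d]) = _
      rw [Matrix.conjTranspose_eq_transpose_of_trivial]
      ext i j
      fin_cases i <;> fin_cases j <;> rfl
    · intro x
      rw [expand x]
      nlinarith [sq_nonneg (b * x 0 + d * x 1), mul_nonneg hdet0 (sq_nonneg (x 0)), hdpos]
end

section
/- For n real numbers α₁,…,α_n with n ≥ 1, one has Σ_{j=1}^{n} cos²(α_j)·Π_{k≠j} sin²(α_k) + Σ_{j=1}^{n} sin²(α_j)·Π_{k≠j} cos²(α_k) + Π_{j=1}^{n} cos²(α_j) + Π_{j=1}^{n} sin²(α_j) ≤ Σ_{j=1}^{n-1} cos²(α_j)·Π_{k≤n-1, k≠j} sin²(α_k) + Σ_{j=1}^{n-1} sin²(α_j)·Π_{k≤n-1, k≠j} cos²(α_k) + Π_{j=1}^{n-1} cos²(α_j) + Π_{j=1}^{n-1} sin²(α_j), for n ≥ 2; in particular the left-hand side with n terms is at most 1 for all n ≥ 3. -/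
open Real in
/-- The expression
`Σ_j cos²(α_j)·Π_{k≠j} sin²(α_k) + Σ_j sin²(α_j)·Π_{k≠j} cos²(α_k)
  + Π_j cos²(α_j) + Π_j sin²(α_j)` for `j, k` ranging over `{0, …, n-1}`. -/
noncomputable def E (n : ℕ) (α : ℕ → ℝ) : ℝ :=
  (∑ j ∈ Finset.range n, cos (α j) ^ 2 * ∏ k ∈ (Finset.range n).erase j, sin (α k) ^ 2) +
  (∑ j ∈ Finset.range n, sin (α j) ^ 2 * ∏ k ∈ (Finset.range n).erase j, cos (α k) ^ 2) +
  (∏ j ∈ Finset.range n, cos (α j) ^ 2) + ∏ j ∈ Finset.range n, sin (α j) ^ 2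

open Real Finset in
lemma E_step (n : ℕ) (α : ℕ → ℝ) : E (n+1) α ≤ E n α := by
  have hnotmem : ∀ j, n ∉ (range n).erase j := fun j h => by
    have := mem_of_mem_erase h; simp at this
  have herase : ∀ j ∈ range n, (range (n+1)).erase j = insert n ((range n).erase j) := by
    intro j hj
    rw [range_add_one, erase_insert_of_ne (by simp at hj; omega)]
  have hsum : ∀ f : ℕ → ℝ, ∀ g : ℕ → ℝ,
      (∑ j ∈ range (n+1), f j * ∏ k ∈ (range (n+1)).erase j, g k) =
      (∑ j ∈ range n, f j * ∏ k ∈ (range n).erase j, g k) * g n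
        + f n * ∏ k ∈ range n, g k := by
    intro f g
    rw [sum_range_succ, range_add_one, erase_insert (by simp), sum_mul]
    congr 1
    refine sum_congr rfl fun j hj => ?_
    rw [show (insert n (range n)) = range (n+1) from (range_add_one ..).symm,
      herase j hj, prod_insert (hnotmem j)]
    ring
  unfold E
  rw [hsum, hsum, prod_range_succ, prod_range_succ]
  set A := ∑ j ∈ range n, cos (α j) ^ 2 * ∏ k ∈ (range n).erase j, sin (α k) ^ 2 with hA
  set B := ∑ j ∈ range n, sin (α j) ^ 2 * ∏ k ∈ (range n).erase j, cos (α k) ^ 2 with hB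
  set C := ∏ j ∈ range n, cos (α j) ^ 2 with hC
  set S := ∏ j ∈ range n, sin (α j) ^ 2 with hS
  have hA0 : 0 ≤ A := sum_nonneg fun j _ => by positivity
  have hB0 : 0 ≤ B := sum_nonneg fun j _ => by positivity
  have hC0 : 0 ≤ C := prod_nonneg fun j _ => by positivity
  have hS0 : 0 ≤ S := prod_nonneg fun j _ => by positivity
  have hcs : sin (α n) ^ 2 + cos (α n) ^ 2 = 1 := sin_sq_add_cos_sq _
  have hc0 : 0 ≤ cos (α n) ^ 2 := sq_nonneg _
  have hs0 : 0 ≤ sin (α n) ^ 2 := sq_nonneg _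
  nlinarith [mul_nonneg hA0 hc0, mul_nonneg hB0 hs0]

open Real Finset in
lemma E_three (α : ℕ → ℝ) : E 3 α = 1 := by
  have h0 := sin_sq_add_cos_sq (α 0)
  have h1 := sin_sq_add_cos_sq (α 1)
  have h2 := sin_sq_add_cos_sq (α 2)
  simp only [E, show (3:ℕ) = 2+1 from rfl, Finset.sum_range_succ, Finset.prod_range_succ,
    Finset.range_add_one, Finset.range_zero]
  norm_num [Finset.sum_insert, Finset.prod_insert, Finset.erase_insert,
    Finset.erase_insert_of_ne, Finset.mem_insert]
  rw [show sin (α 0)^2 = 1 - cos (α 0)^2 by linarith,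
      show sin (α 1)^2 = 1 - cos (α 1)^2 by linarith,
      show sin (α 2)^2 = 1 - cos (α 2)^2 by linarith]
  ring

/-- the `n`-angle expression is bounded by the `(n-1)`-angle expression
for `n ≥ 2`, and in particular is at most `1` for all `n ≥ 3`. -/
theorem stmt13 :
    (∀ (n : ℕ), 2 ≤ n → ∀ α : ℕ → ℝ, E n α ≤ E (n - 1) α) ∧
      (∀ (n : ℕ), 3 ≤ n → ∀ α : ℕ → ℝ, E n α ≤ 1) := by
  constructor
  · intro n hn α
    obtain ⟨m, rfl⟩ : ∃ m, n = m + 1 := ⟨n - 1, by omega⟩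
    simpa using E_step m α
  · have aux : ∀ m (α : ℕ → ℝ), E (3 + m) α ≤ 1 := by
      intro m α
      induction m with
      | zero => simp [E_three]
      | succ k ih => exact le_trans (E_step (3 + k) α) ih
    intro n hn α
    obtain ⟨m, rfl⟩ : ∃ m, n = 3 + m := ⟨n - 3, by omega⟩
    exact aux m α
end
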